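/- For every n ≥ 3 and every λ_1 with 2 ≤ λ_1 ≤ n−1, one has |η_{(λ_1,1^{n−λ_1})}| < |η_{(λ_1+1,1^{n−λ_1−1})}|; equivalently, D_{λ_1} + (n−λ_1)·D_{λ_1−1} < D_{λ_1+1} + (n−λ_1−1)·D_{λ_1}. In other words, the absolute values of the hook eigenvalues strictly increase with the first part. -/

import Mathlib

/-- Derangement numbers: `D 0 = 1`, `D (m+1) = (m+1) * D m + (-1)^(m+1)`. -/
def derange : ℕ → ℤ
  | 0 => 1
  | n + 1 => (n + 1 : ℤ) * derange n + (-1) ^ (n + 1)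

/-- Subtract one from every part and discard the parts that become zero
(deleting the first column of the Ferrers diagram). -/
def strip (l : List ℕ) : List ℕ := (l.map (· - 1)).filter (fun x => 0 < x)

lemma strip_measure (l : List ℕ) : (strip l).sum + (strip l).length ≤ l.sum := by
  induction l with
  | nil => simp [strip]
  | cons x t ih =>
      simp only [strip, List.map_cons, List.filter_cons] at ih ⊢
      by_cases hx : 0 < x - 1 <;> simp [hx] <;> omega

/-- The eigenvalues of the derangement graph, defined by Renteln's recurrence:
`η ∅ = 1` and `η λ = (-1)^h (η (λ-ĥ) + (-1)^{λ₁} h η (λ-ĉ))`, where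
`h = λ₁ + r - 1` is the hook size, `λ-ĥ = strip (tail λ)` removes the hook,
and `λ-ĉ = strip λ` removes the first column. -/
def eta : List ℕ → ℤ
  | [] => 1
  | a :: t =>
      (-1) ^ (a + t.length) *
        (eta (strip t) + (-1) ^ a * ((a : ℤ) + t.length) * eta (strip (a :: t)))
  termination_by l => l.sum + l.length
  decreasing_by
  · have h1 := strip_measure t
    simp only [List.sum_cons, List.length_cons]
    omega
  · have h1 := strip_measure (a :: t)
    simp only [List.sum_cons, List.length_cons] at h1 ⊢
    omega

/-- `l` is (the list of parts of) a partition of `n`: weakly decreasing,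
all parts positive, summing to `n`. -/
def IsPartition (n : ℕ) (l : List ℕ) : Prop :=
  l.Pairwise (· ≥ ·) ∧ (∀ x ∈ l, 0 < x) ∧ l.sum = n

/-- The hook partition `(a, 1^(n-a))` of `n`. -/
def hookP (n a : ℕ) : List ℕ := a :: List.replicate (n - a) 1

/-!
Removing the hook of `(a, 1^(n-a))` leaves the empty partition and removing its first column
leaves the single row `(a-1)`, whose eigenvalue is `D_{a-1}`. Renteln's recurrence then gives
`η_{(a,1^(n-a))} = ±(D_a + (n-a) D_{a-1})`. Two steps of the derangement recurrence show that
consecutive values of `D_a + (n-a) D_{a-1}` differ by `n (a-1) D_{a-1} + (-1)^a (n-2)`, which is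
positive: for even `a` the second term is positive and the first nonnegative, and for odd `a ≥ 3`
the first term is at least `2n` because `D_{a-1} ≥ 1`.
-/

lemma derange_succ (m : ℕ) : derange (m + 1) = (m + 1) * derange m + (-1) ^ (m + 1) := rfl

lemma one_le_derange {m : ℕ} (hm : 2 ≤ m) : 1 ≤ derange m := by
  induction m, hm using Nat.le_induction with
  | base => decide
  | succ m hm ih =>
    rw [derange_succ]
    rcases neg_one_pow_eq_or ℤ (m + 1) with h | h <;> rw [h] <;> nlinarith

lemma derange_nonneg : ∀ m : ℕ, 0 ≤ derange m
  | 0 => zero_le_one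
  | 1 => le_rfl
  | _ + 2 => zero_le_one.trans (one_le_derange le_add_self)

lemma strip_replicate_one (k : ℕ) : strip (List.replicate k 1) = [] := by
  simp [strip]

lemma strip_cons_replicate_one {a : ℕ} (k : ℕ) (ha : 2 ≤ a) :
    strip (a :: List.replicate k 1) = [a - 1] := by
  have h := strip_replicate_one k
  rw [strip] at h ⊢
  rw [List.map_cons, List.filter_cons_of_pos (by simp only [decide_eq_true_eq]; omega), h]

lemma eta_nil : eta [] = 1 := by rw [eta]

lemma eta_cons (a : ℕ) (t : List ℕ) :
    eta (a :: t) = (-1) ^ (a + t.length) *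
      (eta (strip t) + (-1) ^ a * ((a : ℤ) + t.length) * eta (strip (a :: t))) := by
  rw [eta]

lemma eta_singleton (m : ℕ) : eta [m] = derange m := by
  induction m with
  | zero => simp [eta_cons, strip, eta_nil, derange]
  | succ m ih =>
    have h_strip : eta (strip [m + 1]) = derange m := by
      cases m with
      | zero => simp [strip, eta_nil, derange]
      | succ m => simpa [strip] using ih
    rw [eta_cons, h_strip, strip, List.map_nil, List.filter_nil, eta_nil, List.length_nil,
      derange_succ]
    push_cast
    linear_combination (m + 1 : ℤ) * derange m * (even_two_mul (m + 1)).neg_one_pow (α := ℤ)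

lemma eta_hookP {n a : ℕ} (ha : 2 ≤ a) (han : a ≤ n) :
    eta (hookP n a) = (-1) ^ (n + a) * (derange a + ((n - a : ℕ) : ℤ) * derange (a - 1)) := by
  obtain ⟨b, rfl⟩ : ∃ b, a = b + 1 := ⟨a - 1, by omega⟩
  rw [hookP, eta_cons, strip_replicate_one, eta_nil, strip_cons_replicate_one _ ha,
    Nat.add_sub_cancel, eta_singleton, List.length_replicate,
    show b + 1 + (n - (b + 1)) = n by omega, derange_succ, Nat.cast_sub han, pow_add]
  push_cast
  linear_combination (-(-1 : ℤ) ^ n) * (even_two_mul (b + 1)).neg_one_pow (α := ℤ)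

lemma abs_eta_hookP {n a : ℕ} (ha : 2 ≤ a) (han : a ≤ n) :
    |eta (hookP n a)| = derange a + ((n - a : ℕ) : ℤ) * derange (a - 1) := by
  rw [eta_hookP ha han, abs_mul, abs_neg_one_pow, one_mul, abs_of_nonneg]
  exact add_nonneg (derange_nonneg a) (mul_nonneg (Nat.cast_nonneg _) (derange_nonneg _))

lemma derange_hook_succ_sub (n : ℤ) (b : ℕ) :
    (derange (b + 2) + (n - (b + 2)) * derange (b + 1))
      - (derange (b + 1) + (n - (b + 1)) * derange b)
      = n * b * derange b + (n - 2) * (-1) ^ (b + 1) := by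
  rw [derange_succ (b + 1), derange_succ b]
  push_cast
  ring

lemma derange_hook_lt_succ {n : ℤ} {b : ℕ} (hn : 3 ≤ n) (hb : 1 ≤ b) :
    derange (b + 1) + (n - (b + 1)) * derange b
      < derange (b + 2) + (n - (b + 2)) * derange (b + 1) := by
  rw [← sub_pos, derange_hook_succ_sub]
  rcases Nat.even_or_odd b with hb_even | hb_odd
  · have hb2 : 2 ≤ b := by obtain ⟨k, rfl⟩ := hb_even; omega
    have hD : 1 ≤ derange b := one_le_derange hb2
    rw [hb_even.add_one.neg_one_pow]
    nlinarith [mul_le_mul (by exact_mod_cast hb2 : (2 : ℤ) ≤ b) hD zero_le_one (by positivity)]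
  · rw [hb_odd.add_one.neg_one_pow]
    have hn0 : (0 : ℤ) ≤ n := by omega
    nlinarith [mul_nonneg (mul_nonneg hn0 (Nat.cast_nonneg b)) (derange_nonneg b)]

theorem eta_hook_abs_strict_mono_general (n a : ℕ) (ha : 2 ≤ a) (han : a ≤ n - 1) :
    |eta (hookP n a)| < |eta (hookP n (a + 1))| ∧
    derange a + ((n - a : ℕ) : ℤ) * derange (a - 1) <
      derange (a + 1) + ((n - a - 1 : ℕ) : ℤ) * derange a := by
  obtain ⟨b, rfl⟩ : ∃ b, a = b + 1 := ⟨a - 1, by omega⟩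
  have hlt := derange_hook_lt_succ (n := n) (by omega) (by omega : 1 ≤ b)
  rw [abs_eta_hookP ha (by omega), abs_eta_hookP (by omega) (by omega), Nat.sub_sub,
    Nat.cast_sub (by omega), Nat.cast_sub (by omega), Nat.add_sub_cancel]
  push_cast
  exact ⟨hlt, hlt⟩

/-- For `n ≥ 3` and `2 ≤ a ≤ n-1`, `|η_{(a,1^{n-a})}| < |η_{(a+1,1^{n-a-1})}|`;
equivalently `D_a + (n-a) D_{a-1} < D_{a+1} + (n-a-1) D_a`. -/
theorem eta_hook_abs_strict_mono (n a : ℕ) (hn : 3 ≤ n) (ha : 2 ≤ a) (han : a ≤ n - 1) :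
    |eta (hookP n a)| < |eta (hookP n (a + 1))| ∧
    derange a + ((n - a : ℕ) : ℤ) * derange (a - 1) <
      derange (a + 1) + ((n - a - 1 : ℕ) : ℤ) * derange a :=
  eta_hook_abs_strict_mono_general n a ha han
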